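/- Soundness of abstraction: for every nonempty set A of static canonical terms, A is contained in γ(α(A)). -/

import Mathlib

set_option autoImplicit false

namespace GDTL

/-! ### Static and gradual canonical terms -/

/-- Static canonical terms (de Bruijn indices, spine applications as binary `app`). -/
inductive STm : Type
  | typ : ℕ → STm
  | var : ℕ → STm
  | lam : STm → STm
  | app : STm → STm → STm
  | pi  : STm → STm → STm
  deriving DecidableEq

/-- Gradual canonical terms: static canonical terms extended with the unknown term `?`. -/
inductive GTm : Type
  | dyn : GTm
  | typ : ℕ → GTm
  | var : ℕ → GTm
  | lam : GTm → GTm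
  | app : GTm → GTm → GTm
  | pi  : GTm → GTm → GTm
  deriving DecidableEq

/-- Concretization: the set of static canonical terms represented by a gradual one. -/
def gamma : GTm → Set STm
  | .dyn => Set.univ
  | .typ i => {STm.typ i}
  | .var x => {STm.var x}
  | .lam u => STm.lam '' gamma u
  | .app u v => Set.image2 STm.app (gamma u) (gamma v)
  | .pi a b => Set.image2 STm.pi (gamma a) (gamma b)

/-- The abstraction function, as a relation: `Abs A u` means `α(A) = u`.
`α` is compositional when all elements of `A` share the same top-level
constructor, and returns `?` otherwise. -/
inductive Abs : Set STm → GTm → Prop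
  | typ (i : ℕ) : Abs {STm.typ i} (.typ i)
  | var (x : ℕ) : Abs {STm.var x} (.var x)
  | lam {B : Set STm} {u : GTm} : B.Nonempty → Abs B u → Abs (STm.lam '' B) (.lam u)
  | app {A B : Set STm} {a b : GTm} : A.Nonempty → B.Nonempty →
      Abs A a → Abs B b → Abs (Set.image2 STm.app A B) (.app a b)
  | pi {A B : Set STm} {a b : GTm} : A.Nonempty → B.Nonempty →
      Abs A a → Abs B b → Abs (Set.image2 STm.pi A B) (.pi a b)
  | dyn {A : Set STm} : A.Nonempty →
      (¬ ∃ i, A = {STm.typ i}) →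
      (¬ ∃ x, A = {STm.var x}) →
      (¬ ∃ B : Set STm, B.Nonempty ∧ A = STm.lam '' B) →
      (¬ ∃ A₁ A₂ : Set STm, A₁.Nonempty ∧ A₂.Nonempty ∧ A = Set.image2 STm.app A₁ A₂) →
      (¬ ∃ A₁ A₂ : Set STm, A₁.Nonempty ∧ A₂.Nonempty ∧ A = Set.image2 STm.pi A₁ A₂) →
      Abs A .dyn

open Classical in
/-- Abstraction as a (noncomputable) function. -/
noncomputable def alpha (A : Set STm) : GTm :=
  if h : ∃ u, Abs A u then h.choose else .dyn

/-! ### Precision and the meet -/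

/-- Syntactic precision `u ⊑ u'`: `?` is the top (least precise) element. -/
inductive Prec : GTm → GTm → Prop
  | dyn (u : GTm) : Prec u .dyn
  | typ (i : ℕ) : Prec (.typ i) (.typ i)
  | var (x : ℕ) : Prec (.var x) (.var x)
  | lam {u u' : GTm} : Prec u u' → Prec (.lam u) (.lam u')
  | app {a a' b b' : GTm} : Prec a a' → Prec b b' → Prec (.app a b) (.app a' b')
  | pi {a a' b b' : GTm} : Prec a a' → Prec b b' → Prec (.pi a b) (.pi a' b')

/-- The (partial) precision meet `U ⊓ U'`. -/
def meet : GTm → GTm → Option GTm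
  | u, .dyn => some u
  | .dyn, u => some u
  | .typ i, .typ j => if i = j then some (.typ i) else none
  | .var x, .var y => if x = y then some (.var x) else none
  | .lam u, .lam u' => Option.map GTm.lam (meet u u')
  | .app a b, .app a' b' =>
      match meet a a', meet b b' with
      | some c, some d => some (.app c d)
      | _, _ => none
  | .pi a b, .pi a' b' =>
      match meet a a', meet b b' with
      | some c, some d => some (.pi c d)
      | _, _ => none
  | _, _ => none

/-- Consistency: the meet is defined (equivalently, concretizations intersect). -/
def Consist (U V : GTm) : Prop := ∃ W, meet U V = some W

/-! ### Approximate hereditary substitution -/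

/-- `HSub U x u t t'` means `[u/x]^U t = t'` : approximate hereditary substitution
of `u` for variable `x` at type `U` in the canonical form `t`. -/
inductive HSub : GTm → ℕ → GTm → GTm → GTm → Prop
  | varEq (U : GTm) (x : ℕ) (u : GTm) : HSub U x u (.var x) u
  | varLt {U : GTm} {x y : ℕ} {u : GTm} : y < x → HSub U x u (.var y) (.var y)
  | varGt {U : GTm} {x y : ℕ} {u : GTm} : x < y → HSub U x u (.var y) (.var (y - 1))
  | typ (U : GTm) (x : ℕ) (u : GTm) (i : ℕ) : HSub U x u (.typ i) (.typ i)
  | dyn (U : GTm) (x : ℕ) (u : GTm) : HSub U x u .dyn .dyn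
  | lam {U : GTm} {x : ℕ} {u b b' : GTm} :
      HSub U (x+1) u b b' → HSub U x u (.lam b) (.lam b')
  | pi {U : GTm} {x : ℕ} {u a a' b b' : GTm} :
      HSub U x u a a' → HSub U (x+1) u b b' → HSub U x u (.pi a b) (.pi a' b')
  | appCong {U : GTm} {x : ℕ} {u f f' a a' : GTm} :
      HSub U x u f f' → HSub U x u a a' →
      (∀ b, f' ≠ .lam b) → f' ≠ .dyn →
      HSub U x u (.app f a) (.app f' a')
  | appBeta {A B : GTm} {x : ℕ} {u f a a' b r : GTm} :
      HSub (.pi A B) x u f (.lam b) → HSub (.pi A B) x u a a' →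
      HSub A 0 a' b r →
      HSub (.pi A B) x u (.app f a) r
  | appDynType {x : ℕ} {u f a b a' : GTm} :
      HSub .dyn x u f (.lam b) → HSub .dyn x u a a' →
      HSub .dyn x u (.app f a) .dyn
  | appDynHead {U : GTm} {x : ℕ} {u f a a' : GTm} :
      HSub U x u f .dyn → HSub U x u a a' →
      HSub U x u (.app f a) .dyn

/-- Pointwise hereditary substitution on typing environments. -/
inductive EnvSub : GTm → ℕ → GTm → List GTm → List GTm → Prop
  | nil (U : GTm) (x : ℕ) (u : GTm) : EnvSub U x u [] []
  | cons {U : GTm} {x : ℕ} {u T T' : GTm} {Γ Γ' : List GTm} :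
      HSub U x u T T' → EnvSub U x u (T :: Γ) (T' :: Γ')

/-! ### Bidirectional typing of canonical forms -/

mutual
  /-- `CanSynth Γ u U` : the canonical form `u` synthesizes type `U`. -/
  inductive CanSynth : List GTm → GTm → GTm → Prop
    | typ {Γ : List GTm} {i : ℕ} : CanSynth Γ (.typ i) (.typ (i+1))
    | var {Γ : List GTm} {x : ℕ} {U : GTm} : Γ[x]? = some U → CanSynth Γ (.var x) U
    | app {Γ : List GTm} {f a A B B' : GTm} :
        CanSynth Γ f (.pi A B) → CanCheck Γ a A → HSub A 0 a B B' →
        CanSynth Γ (.app f a) B'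
    | appDyn {Γ : List GTm} {f a : GTm} :
        CanSynth Γ f .dyn → CanCheck Γ a .dyn → CanSynth Γ (.app f a) .dyn

  /-- `CanCheck Γ u U` : the canonical form `u` checks against type `U`. -/
  inductive CanCheck : List GTm → GTm → GTm → Prop
    | dyn {Γ : List GTm} {U : GTm} : CanCheck Γ .dyn U
    | synth {Γ : List GTm} {u U U' : GTm} : CanSynth Γ u U' → Consist U' U → CanCheck Γ u U
    | level {Γ : List GTm} {u : GTm} {i j : ℕ} :
        CanSynth Γ u (.typ i) → i ≤ j → CanCheck Γ u (.typ j)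
    | lam {Γ : List GTm} {u A B : GTm} : CanCheck (A :: Γ) u B → CanCheck Γ (.lam u) (.pi A B)
    | lamDyn {Γ : List GTm} {u : GTm} : CanCheck (.dyn :: Γ) u .dyn → CanCheck Γ (.lam u) .dyn
    | pi {Γ : List GTm} {A B : GTm} {i : ℕ} :
        CanCheck Γ A (.typ i) → CanCheck (A :: Γ) B (.typ i) → CanCheck Γ (.pi A B) (.typ i)
end

/-! ### Gradual source terms -/

/-- Gradual source terms (with ascriptions). -/
inductive Tm : Type
  | dyn : Tm
  | typ : ℕ → Tm
  | var : ℕ → Tm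
  | lam : Tm → Tm
  | app : Tm → Tm → Tm
  | pi  : Tm → Tm → Tm
  | ann : Tm → Tm → Tm
  deriving DecidableEq

def Tm.shift : ℕ → Tm → Tm
  | _, .dyn => .dyn
  | _, .typ i => .typ i
  | c, .var y => if c ≤ y then .var (y+1) else .var y
  | c, .lam b => .lam (Tm.shift (c+1) b)
  | c, .app f a => .app (Tm.shift c f) (Tm.shift c a)
  | c, .pi a b => .pi (Tm.shift c a) (Tm.shift (c+1) b)
  | c, .ann t T => .ann (Tm.shift c t) (Tm.shift c T)

/-- Syntactic substitution `[x ↦ s]t` on source terms. -/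
def Tm.subst : ℕ → Tm → Tm → Tm
  | _, _, .dyn => .dyn
  | _, _, .typ i => .typ i
  | x, s, .var y => if y = x then s else if x < y then .var (y-1) else .var y
  | x, s, .lam b => .lam (Tm.subst (x+1) (Tm.shift 0 s) b)
  | x, s, .app f a => .app (Tm.subst x s f) (Tm.subst x s a)
  | x, s, .pi a b => .pi (Tm.subst x s a) (Tm.subst (x+1) (Tm.shift 0 s) b)
  | x, s, .ann t T => .ann (Tm.subst x s t) (Tm.subst x s T)

/-- αβη-equivalence (plus erasure of ascriptions) on source terms. -/
inductive TmEq : Tm → Tm → Prop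
  | refl (t : Tm) : TmEq t t
  | symm {t t' : Tm} : TmEq t t' → TmEq t' t
  | trans {t t' t'' : Tm} : TmEq t t' → TmEq t' t'' → TmEq t t''
  | beta (b a : Tm) : TmEq (.app (.lam b) a) (Tm.subst 0 a b)
  | eta (t : Tm) : TmEq (.lam (.app (Tm.shift 0 t) (.var 0))) t
  | ann (t T : Tm) : TmEq (.ann t T) t
  | lam {t t' : Tm} : TmEq t t' → TmEq (.lam t) (.lam t')
  | app {f f' a a' : Tm} : TmEq f f' → TmEq a a' → TmEq (.app f a) (.app f' a')
  | pi {a a' b b' : Tm} : TmEq a a' → TmEq b b' → TmEq (.pi a b) (.pi a' b')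

/-- Syntactic precision on source terms, `?` is the top element. -/
inductive TmPrec : Tm → Tm → Prop
  | dyn (t : Tm) : TmPrec t .dyn
  | typ (i : ℕ) : TmPrec (.typ i) (.typ i)
  | var (x : ℕ) : TmPrec (.var x) (.var x)
  | lam {t t' : Tm} : TmPrec t t' → TmPrec (.lam t) (.lam t')
  | app {f f' a a' : Tm} : TmPrec f f' → TmPrec a a' → TmPrec (.app f a) (.app f' a')
  | pi {a a' b b' : Tm} : TmPrec a a' → TmPrec b b' → TmPrec (.pi a b) (.pi a' b')
  | ann {t t' T T' : Tm} : TmPrec t t' → TmPrec T T' → TmPrec (.ann t T) (.ann t' T')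

/-- Embedding of canonical forms into source terms. -/
def GTm.toTm : GTm → Tm
  | .dyn => .dyn
  | .typ i => .typ i
  | .var x => .var x
  | .lam u => .lam u.toTm
  | .app f a => .app f.toTm a.toTm
  | .pi a b => .pi a.toTm b.toTm

/-! ### Typing and approximate normalization for source terms -/

mutual
  /-- Type synthesis `Γ ⊢ t ⇒ U`. -/
  inductive Synth : List GTm → Tm → GTm → Prop
    | typ {Γ : List GTm} {i : ℕ} : Synth Γ (.typ i) (.typ (i+1))
    | var {Γ : List GTm} {x : ℕ} {U : GTm} : Γ[x]? = some U → Synth Γ (.var x) U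
    | dyn {Γ : List GTm} : Synth Γ .dyn .dyn
    | ann {Γ : List GTm} {t T : Tm} {U : GTm} :
        NormTy Γ T U → Check Γ t U → Synth Γ (.ann t T) U
    | app {Γ : List GTm} {t s : Tm} {A B B' u : GTm} :
        Synth Γ t (.pi A B) → Check Γ s A → Norm Γ s A u → HSub A 0 u B B' →
        Synth Γ (.app t s) B'
    | appDyn {Γ : List GTm} {t s : Tm} :
        Synth Γ t .dyn → Check Γ s .dyn → Synth Γ (.app t s) .dyn

  /-- Type checking `Γ ⊢ t ⇐ U`. -/
  inductive Check : List GTm → Tm → GTm → Prop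
    | synth {Γ : List GTm} {t : Tm} {U U' : GTm} :
        Synth Γ t U' → Consist U' U → Check Γ t U
    | level {Γ : List GTm} {t : Tm} {i j : ℕ} :
        Synth Γ t (.typ i) → i ≤ j → Check Γ t (.typ j)
    | lam {Γ : List GTm} {t : Tm} {A B : GTm} :
        Check (A :: Γ) t B → Check Γ (.lam t) (.pi A B)
    | lamDyn {Γ : List GTm} {t : Tm} :
        Check (.dyn :: Γ) t .dyn → Check Γ (.lam t) .dyn
    | pi {Γ : List GTm} {A B : Tm} {A' : GTm} {i : ℕ} :
        Check Γ A (.typ i) → NormTy Γ A A' → Check (A' :: Γ) B (.typ i) →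
        Check Γ (.pi A B) (.typ i)

  /-- Approximate normalization with synthesis `Γ ⊢ t ⇝ u ⇒ U`. -/
  inductive NormSynth : List GTm → Tm → GTm → GTm → Prop
    | typ {Γ : List GTm} {i : ℕ} : NormSynth Γ (.typ i) (.typ i) (.typ (i+1))
    | dyn {Γ : List GTm} : NormSynth Γ .dyn .dyn .dyn
    | var {Γ : List GTm} {x : ℕ} {U : GTm} : Γ[x]? = some U → NormSynth Γ (.var x) (.var x) U
    | ann {Γ : List GTm} {t T : Tm} {u U : GTm} :
        NormTy Γ T U → Norm Γ t U u → NormSynth Γ (.ann t T) u U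
    | app {Γ : List GTm} {t s : Tm} {b u r A B B' : GTm} :
        NormSynth Γ t (.lam b) (.pi A B) → Norm Γ s A u →
        HSub A 0 u b r → HSub A 0 u B B' →
        NormSynth Γ (.app t s) r B'
    | appDyn {Γ : List GTm} {t s : Tm} {f u : GTm} :
        NormSynth Γ t f .dyn → Norm Γ s .dyn u → NormSynth Γ (.app t s) .dyn .dyn

  /-- Approximate normalization with checking `Γ ⊢ u ⇚ t ⇐ U`
  (`Norm Γ t U u` : `t` checked against `U` normalizes to the canonical form `u`). -/
  inductive Norm : List GTm → Tm → GTm → GTm → Prop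
    | synth {Γ : List GTm} {t : Tm} {u U U' : GTm} :
        NormSynth Γ t u U' → Prec U' U → Norm Γ t U u
    | approx {Γ : List GTm} {t : Tm} {u U U' : GTm} :
        NormSynth Γ t u U' → ¬ Prec U' U → Norm Γ t U .dyn
    | lam {Γ : List GTm} {t : Tm} {A B u : GTm} :
        Norm (A :: Γ) t B u → Norm Γ (.lam t) (.pi A B) (.lam u)
    | lamDyn {Γ : List GTm} {t : Tm} {u : GTm} :
        Norm (.dyn :: Γ) t .dyn u → Norm Γ (.lam t) .dyn (.lam u)
    | pi {Γ : List GTm} {A B : Tm} {a b : GTm} {i : ℕ} :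
        Norm Γ A (.typ i) a → Norm (a :: Γ) B (.typ i) b →
        Norm Γ (.pi A B) (.typ i) (.pi a b)

  /-- Type normalization at an unknown level. -/
  inductive NormTy : List GTm → Tm → GTm → Prop
    | typ {Γ : List GTm} {T : Tm} {U : GTm} {i : ℕ} :
        NormSynth Γ T U (.typ i) → NormTy Γ T U
    | dyn {Γ : List GTm} {T : Tm} {U : GTm} :
        NormSynth Γ T U .dyn → NormTy Γ T U
end

/-! ### Evidence terms and runtime semantics -/

/-- Runtime evidence terms: ascriptions are replaced by evidence, plus `err`. -/
inductive ETm : Type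
  | dyn : ETm
  | typ : ℕ → ETm
  | var : ℕ → ETm
  | lam : ETm → ETm
  | app : ETm → ETm → ETm
  | pi  : ETm → ETm → ETm
  | ev  : GTm → ETm → ETm
  | err : ETm
  deriving DecidableEq

def ETm.shift : ℕ → ETm → ETm
  | _, .dyn => .dyn
  | _, .typ i => .typ i
  | c, .var y => if c ≤ y then .var (y+1) else .var y
  | c, .lam b => .lam (ETm.shift (c+1) b)
  | c, .app f a => .app (ETm.shift c f) (ETm.shift c a)
  | c, .pi a b => .pi (ETm.shift c a) (ETm.shift (c+1) b)
  | c, .ev e t => .ev e (ETm.shift c t)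
  | _, .err => .err

def ETm.subst : ℕ → ETm → ETm → ETm
  | _, _, .dyn => .dyn
  | _, _, .typ i => .typ i
  | x, s, .var y => if y = x then s else if x < y then .var (y-1) else .var y
  | x, s, .lam b => .lam (ETm.subst (x+1) (ETm.shift 0 s) b)
  | x, s, .app f a => .app (ETm.subst x s f) (ETm.subst x s a)
  | x, s, .pi a b => .pi (ETm.subst x s a) (ETm.subst (x+1) (ETm.shift 0 s) b)
  | x, s, .ev e t => .ev e (ETm.subst x s t)
  | _, _, .err => .err

/-- Erasure of evidence, back to source terms (`err` is erased to `?`). -/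
def ETm.erase : ETm → Tm
  | .dyn => .dyn
  | .typ i => .typ i
  | .var x => .var x
  | .lam t => .lam t.erase
  | .app f a => .app f.erase a.erase
  | .pi a b => .pi a.erase b.erase
  | .ev _ t => t.erase
  | .err => .dyn

mutual
  /-- Raw values: values with no top-level evidence. -/
  inductive RawValue : ETm → Prop
    | lam (t : ETm) : RawValue (.lam t)
    | typ (i : ℕ) : RawValue (.typ i)
    | dyn : RawValue .dyn
    | pi {a b : ETm} : Value a → Value b → RawValue (.pi a b)

  /-- Values: raw values with at most one top-level evidence annotation. -/
  inductive Value : ETm → Prop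
    | raw {v : ETm} : RawValue v → Value v
    | ev {v : ETm} (e : GTm) : RawValue v → Value (.ev e v)
end

/-- `ε` is evidence witnessing the consistency `U₁ ≅ U₂`. -/
def EvWitness (e U₁ U₂ : GTm) : Prop := ∃ m, meet U₁ U₂ = some m ∧ Prec e m

/-- Domain of an evidence type. -/
def domOf : GTm → Option GTm
  | .dyn => some .dyn
  | .pi A _ => some A
  | _ => none

/-- Codomain with substitution: `CodSub a U B'` means `[a/_]cod U = B'`. -/
inductive CodSub : GTm → GTm → GTm → Prop
  | dyn {a : GTm} : CodSub a .dyn .dyn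
  | pi {a A B B' : GTm} : HSub A 0 a B B' → CodSub a (.pi A B) B'

/-- Typing of evidence terms, `Γ ⊢ t : U`. -/
inductive EvType : List GTm → ETm → GTm → Prop
  | typ {Γ : List GTm} {i : ℕ} : EvType Γ (.typ i) (.typ (i+1))
  | level {Γ : List GTm} {t : ETm} {i j : ℕ} :
      EvType Γ t (.typ i) → i ≤ j → EvType Γ t (.typ j)
  | var {Γ : List GTm} {x : ℕ} {U : GTm} : Γ[x]? = some U → EvType Γ (.var x) U
  | dyn {Γ : List GTm} : EvType Γ .dyn .dyn
  | lam {Γ : List GTm} {t : ETm} {A B : GTm} :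
      EvType (A :: Γ) t B → EvType Γ (.lam t) (.pi A B)
  | pi {Γ : List GTm} {a b : ETm} {A' : GTm} {i : ℕ} :
      EvType Γ a (.typ i) → Norm Γ a.erase (.typ i) A' → EvType (A' :: Γ) b (.typ i) →
      EvType Γ (.pi a b) (.typ i)
  | ev {Γ : List GTm} {t : ETm} {e U₁ U₂ : GTm} :
      EvType Γ t U₁ → EvWitness e U₁ U₂ → EvType Γ (.ev e t) U₂
  | app {Γ : List GTm} {f a : ETm} {A B B' u : GTm} :
      EvType Γ f (.pi A B) → EvType Γ a A → Norm Γ a.erase A u → HSub A 0 u B B' →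
      EvType Γ (.app f a) B'
  | appDyn {Γ : List GTm} {f a : ETm} :
      EvType Γ f .dyn → EvType Γ a .dyn → EvType Γ (.app f a) .dyn

/-- Small-step runtime semantics of evidence terms. -/
inductive Step : ETm → ETm → Prop
  | ascr {e₁ e₂ e : GTm} {v : ETm} : RawValue v → meet e₁ e₂ = some e →
      Step (.ev e₁ (.ev e₂ v)) (.ev e v)
  | ascrFail {e₁ e₂ : GTm} {v : ETm} : RawValue v → meet e₁ e₂ = none →
      Step (.ev e₁ (.ev e₂ v)) .err
  | appEvRaw {e₁ : GTm} {b v : ETm} : RawValue v →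
      Step (.app (.ev e₁ (.lam b)) v) (.app (.ev e₁ (.lam b)) (.ev .dyn v))
  | appEv {e₁ e₂ d ed ec ua : GTm} {b v : ETm} : RawValue v →
      domOf e₁ = some d → meet e₂ d = some ed →
      Norm [] v.erase d ua → CodSub ua e₁ ec →
      Step (.app (.ev e₁ (.lam b)) (.ev e₂ v)) (.ev ec (ETm.subst 0 (.ev ed v) b))
  | appFailTrans {e₁ e₂ d : GTm} {b v : ETm} : RawValue v →
      domOf e₁ = some d → meet e₂ d = none →
      Step (.app (.ev e₁ (.lam b)) (.ev e₂ v)) .err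
  | appDyn {e ec ua : GTm} {v : ETm} : Value v →
      Norm [] v.erase .dyn ua → CodSub ua e ec →
      Step (.app (.ev e .dyn) v) (.ev ec .dyn)
  | app1 {t t' u : ETm} : Step t t' → Step (.app t u) (.app t' u)
  | app2 {t u u' : ETm} : Value t → Step u u' → Step (.app t u) (.app t u')
  | evCtx {e : GTm} {t t' : ETm} : Step t t' → Step (.ev e t) (.ev e t')
  | pi1 {a a' b : ETm} : Step a a' → Step (.pi a b) (.pi a' b)
  | pi2 {a b b' : ETm} : Value a → Step b b' → Step (.pi a b) (.pi a b')
  | app1Err {u : ETm} : Step (.app .err u) .err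
  | app2Err {t : ETm} : Value t → Step (.app t .err) .err
  | evErr {e : GTm} : Step (.ev e .err) .err
  | pi1Err {b : ETm} : Step (.pi .err b) .err
  | pi2Err {a : ETm} : Value a → Step (.pi a .err) .err

/-! ### η-equality and precision modulo η on canonical forms -/

def GTm.shift : ℕ → GTm → GTm
  | _, .dyn => .dyn
  | _, .typ i => .typ i
  | c, .var y => if c ≤ y then .var (y+1) else .var y
  | c, .lam b => .lam (GTm.shift (c+1) b)
  | c, .app f a => .app (GTm.shift c f) (GTm.shift c a)
  | c, .pi a b => .pi (GTm.shift c a) (GTm.shift (c+1) b)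

inductive EtaEq : GTm → GTm → Prop
  | refl (u : GTm) : EtaEq u u
  | symm {u v : GTm} : EtaEq u v → EtaEq v u
  | trans {u v w : GTm} : EtaEq u v → EtaEq v w → EtaEq u w
  | eta (u : GTm) : EtaEq (.lam (.app (GTm.shift 0 u) (.var 0))) u
  | lam {u v : GTm} : EtaEq u v → EtaEq (.lam u) (.lam v)
  | app {f f' a a' : GTm} : EtaEq f f' → EtaEq a a' → EtaEq (.app f a) (.app f' a')
  | pi {a a' b b' : GTm} : EtaEq a a' → EtaEq b b' → EtaEq (.pi a b) (.pi a' b')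

/-- Precision modulo η: `u ⊑η u'`. -/
def PrecEta (u u' : GTm) : Prop := ∃ v v', EtaEq u v ∧ EtaEq u' v' ∧ Prec v v'

/-! ### Universe-level multisets and the Dershowitz–Manna order -/

/-- Simple type skeletons with level-annotated arrows. -/
inductive Ty : Type
  | base : Ty
  | pi : ℕ → Ty → Ty → Ty

/-- The multiset of universe levels of all arrow subtypes. -/
def Ty.levels : Ty → Multiset ℕ
  | .base => 0
  | .pi i a b => i ::ₘ (a.levels + b.levels)

/-- The Dershowitz–Manna ordering on multisets of universe levels. -/
def DMLT (M N : Multiset ℕ) : Prop :=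
  ∃ X Y Z : Multiset ℕ, X ≠ 0 ∧ N = Z + X ∧ M = Z + Y ∧ ∀ y ∈ Y, ∃ x ∈ X, y < x

/-! ### Untyped lambda calculus and its embedding -/

inductive UTm : Type
  | var : ℕ → UTm
  | lam : UTm → UTm
  | app : UTm → UTm → UTm
  deriving DecidableEq

def UTm.shift : ℕ → UTm → UTm
  | c, .var y => if c ≤ y then .var (y+1) else .var y
  | c, .lam b => .lam (UTm.shift (c+1) b)
  | c, .app f a => .app (UTm.shift c f) (UTm.shift c a)

def UTm.subst : ℕ → UTm → UTm → UTm
  | x, s, .var y => if y = x then s else if x < y then .var (y-1) else .var y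
  | x, s, .lam b => .lam (UTm.subst (x+1) (UTm.shift 0 s) b)
  | x, s, .app f a => .app (UTm.subst x s f) (UTm.subst x s a)

inductive UValue : UTm → Prop
  | lam (t : UTm) : UValue (.lam t)

/-- Call-by-value reduction for the untyped lambda calculus. -/
inductive UStep : UTm → UTm → Prop
  | beta {b v : UTm} : UValue v → UStep (.app (.lam b) v) (UTm.subst 0 v b)
  | app1 {t t' u : UTm} : UStep t t' → UStep (.app t u) (.app t' u)
  | app2 {t u u' : UTm} : UValue t → UStep u u' → UStep (.app t u) (.app t u')

/-- The embedding `⌈t⌉` into gradual source terms: every λ is ascribed `?`. -/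
def UTm.embed : UTm → Tm
  | .var x => .var x
  | .lam t => .ann (.lam t.embed) .dyn
  | .app t u => .app t.embed u.embed

/-- Elaboration of the embedding into evidence terms: every λ carries `⟨? → ?⟩`. -/
def UTm.elabE : UTm → ETm
  | .var x => .var x
  | .lam t => .ev (.pi .dyn .dyn) (.lam t.elabE)
  | .app t u => .app t.elabE u.elabE

/-- Direct image of an untyped term as an (evidence-free) evidence term. -/
def UTm.toETm : UTm → ETm
  | .var x => .var x
  | .lam t => .lam t.toETm
  | .app t u => .app t.toETm u.toETm

/-- Strip all evidence annotations. -/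
def ETm.stripEv : ETm → ETm
  | .ev _ t => t.stripEv
  | .lam t => .lam t.stripEv
  | .app t u => .app t.stripEv u.stripEv
  | .pi a b => .pi a.stripEv b.stripEv
  | .dyn => .dyn
  | .typ i => .typ i
  | .var x => .var x
  | .err => .err

def UTm.ClosedUnder : ℕ → UTm → Prop
  | n, .var x => x < n
  | n, .lam t => UTm.ClosedUnder (n+1) t
  | n, .app t u => UTm.ClosedUnder n t ∧ UTm.ClosedUnder n u

end GDTL
namespace GDTL

theorem Abs.subset_gamma {A : Set STm} {u : GTm} (h : Abs A u) : A ⊆ gamma u := by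
  induction h with
  | typ _ | var _ => exact subset_rfl
  | lam _ _ ih => exact Set.image_mono ih
  | app _ _ _ _ ih₁ ih₂ | pi _ _ _ _ ih₁ ih₂ => exact Set.image2_subset ih₁ ih₂
  | dyn _ _ _ _ _ _ => exact Set.subset_univ _

/-- Soundness of abstraction: for every nonempty set `A` of static
canonical terms, `A ⊆ γ(α(A))`. -/
theorem alpha_sound : ∀ A : Set STm, A.Nonempty → A ⊆ gamma (alpha A) := by
  intro A _
  unfold alpha
  split_ifs with h
  · exact h.choose_spec.subset_gamma
  · exact Set.subset_univ _

end GDTL
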